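/- arXiv:1601.06882 — 8 statements merged into one kernel-verified Lean document; each statement's English description precedes it below -/
import Mathlib

section
/- If K is a random variable that is a deterministic function of both X and Y (i.e., H(K|X) = 0 and H(K|Y) = 0), then H(K) ≤ I(X;Y), with equality if and only if X and Y are conditionally independent given K. -/
open Finset

variable {Ω α β γ κ : Type*}

/-- Probability of the event `X = a` under weight function `p` on a finite sample space. -/
noncomputable def pr [Fintype Ω] (p : Ω → ℝ) [DecidableEq α] (X : Ω → α) (a : α) : ℝ :=
  ∑ ω ∈ Finset.univ.filter (fun ω => X ω = a), p ω

/-- Shannon entropy of a random variable `X`. -/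
noncomputable def ent [Fintype Ω] (p : Ω → ℝ) [Fintype α] [DecidableEq α] (X : Ω → α) : ℝ :=
  ∑ a, Real.negMulLog (pr p X a)

/-- Conditional entropy `H(X|Y)`. -/
noncomputable def condEnt [Fintype Ω] (p : Ω → ℝ) [Fintype α] [DecidableEq α] [Fintype β]
    [DecidableEq β] (X : Ω → α) (Y : Ω → β) : ℝ :=
  ent p (fun ω => (X ω, Y ω)) - ent p Y

/-- Mutual information `I(X;Y)`. -/
noncomputable def mutInf [Fintype Ω] (p : Ω → ℝ) [Fintype α] [DecidableEq α] [Fintype β]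
    [DecidableEq β] (X : Ω → α) (Y : Ω → β) : ℝ :=
  ent p X + ent p Y - ent p (fun ω => (X ω, Y ω))

/-- Conditional mutual information `I(X;Y|K)`. -/
noncomputable def condMutInf [Fintype Ω] (p : Ω → ℝ) [Fintype α] [DecidableEq α] [Fintype β]
    [DecidableEq β] [Fintype κ] [DecidableEq κ] (X : Ω → α) (Y : Ω → β) (K : Ω → κ) : ℝ :=
  condEnt p X K + condEnt p Y K - condEnt p (fun ω => (X ω, Y ω)) K

/-- `p` is a probability mass function on the finite sample space `Ω`. -/
def IsPMF [Fintype Ω] (p : Ω → ℝ) : Prop := (∀ ω, 0 ≤ p ω) ∧ ∑ ω, p ω = 1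

/-- `X` and `Y` are conditionally independent given `K`. -/
def CondIndep [Fintype Ω] (p : Ω → ℝ) [DecidableEq α] [DecidableEq β] [DecidableEq κ]
    (X : Ω → α) (Y : Ω → β) (K : Ω → κ) : Prop :=
  ∀ x y k, pr p (fun ω => (X ω, Y ω, K ω)) (x, y, k) * pr p K k =
    pr p (fun ω => (X ω, K ω)) (x, k) * pr p (fun ω => (Y ω, K ω)) (y, k)

/-- Connectivity of `x` and `x'` in the bipartite graph of the joint pmf `q`
(an edge joins `a` and `b` iff `q (a,b) > 0`). -/
def Conn (q : α × β → ℝ) : α → α → Prop :=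
  Relation.ReflTransGen (fun x x' => ∃ y, 0 < q (x, y) ∧ 0 < q (x', y))

/-- The connected component of `x` in the bipartite graph of `q`, as a finite set. -/
noncomputable def comp [Fintype α] (q : α × β → ℝ) (x : α) : Finset α :=
  open Classical in Finset.univ.filter (fun x' => Conn q x x')

section MyAux
variable [Fintype Ω] {p : Ω → ℝ}

lemma my_pr_eq [DecidableEq α] (V : Ω → α) (a : α) :
    pr p V a = ∑ ω, if V ω = a then p ω else 0 := by
  rw [pr, Finset.sum_filter]

lemma my_pr_nonneg [DecidableEq α] (hp0 : ∀ ω, 0 ≤ p ω) (V : Ω → α) (a : α) :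
    0 ≤ pr p V a :=
  Finset.sum_nonneg fun ω _ => hp0 ω

lemma my_pr_congr [DecidableEq α] [DecidableEq β] {V : Ω → α} {W : Ω → β} {v : α} {w : β}
    (h : ∀ ω, V ω = v ↔ W ω = w) : pr p V v = pr p W w := by
  unfold pr
  congr 1
  ext ω
  simp [h ω]

lemma my_sum_pr [Fintype α] [DecidableEq α] (hp : ∑ ω, p ω = 1) (V : Ω → α) :
    ∑ a, pr p V a = 1 := by
  simp only [my_pr_eq]
  rw [Finset.sum_comm]
  simpa using hp

lemma my_pr_marg_right [Fintype γ] [DecidableEq γ] [DecidableEq α] (V : Ω → γ) (W : Ω → α) (w : α) :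
    ∑ v, pr p (fun ω => (V ω, W ω)) (v, w) = pr p W w := by
  simp only [my_pr_eq, Prod.mk.injEq]
  rw [Finset.sum_comm]
  refine Finset.sum_congr rfl fun ω _ => ?_
  simp only [ite_and]
  rw [Finset.sum_ite_eq]
  simp

lemma my_pr_marg_left [Fintype γ] [DecidableEq γ] [DecidableEq α] (V : Ω → α) (W : Ω → γ) (v : α) :
    ∑ w, pr p (fun ω => (V ω, W ω)) (v, w) = pr p V v := by
  simp only [my_pr_eq, Prod.mk.injEq]
  rw [Finset.sum_comm]
  refine Finset.sum_congr rfl fun ω _ => ?_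
  by_cases h : V ω = v <;> simp [h, Finset.sum_ite_eq]

lemma my_pr_pos_elim [DecidableEq α] (hp0 : ∀ ω, 0 ≤ p ω) {V : Ω → α} {a : α}
    (h : 0 < pr p V a) : ∃ ω, 0 < p ω ∧ V ω = a := by
  by_contra hc
  push_neg at hc
  have : pr p V a = 0 := by
    apply Finset.sum_eq_zero
    intro ω hω
    simp only [Finset.mem_filter] at hω
    have := hc ω
    rcases lt_or_eq_of_le (hp0 ω) with h' | h'
    · exact absurd hω.2 (this h')
    · exact h'.symm
  linarith

lemma my_pr_ge [DecidableEq α] (hp0 : ∀ ω, 0 ≤ p ω) (V : Ω → α) (ω : Ω) :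
    p ω ≤ pr p V (V ω) := by
  apply Finset.single_le_sum (fun ω _ => hp0 ω)
  simp

lemma my_ent_comp [Fintype α] [DecidableEq α] [Fintype β] [DecidableEq β]
    (e : α ≃ β) (V : Ω → α) : ent p (fun ω => e (V ω)) = ent p V := by
  unfold ent
  rw [← Equiv.sum_comp e]
  refine Finset.sum_congr rfl fun a _ => ?_
  congr 1
  exact my_pr_congr fun ω => by simp [e.injective.eq_iff]

lemma my_group_diff {ι : Type*} [Fintype ι] (q : ι → ℝ) :
    ∑ i, Real.negMulLog (q i) - Real.negMulLog (∑ i, q i)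
      = ∑ i, q i * (Real.log (∑ j, q j) - Real.log (q i)) := by
  rw [Real.negMulLog, neg_mul, sub_neg_eq_add, Finset.sum_mul]
  rw [← Finset.sum_add_distrib]
  refine Finset.sum_congr rfl fun i _ => ?_
  rw [Real.negMulLog]
  ring

lemma my_group_term_nonneg {ι : Type*} [Fintype ι] (q : ι → ℝ) (hq : ∀ i, 0 ≤ q i) (i : ι) :
    0 ≤ q i * (Real.log (∑ j, q j) - Real.log (q i)) := by
  rcases eq_or_lt_of_le (hq i) with h | h
  · simp [← h]
  · apply mul_nonneg h.le
    have hle : q i ≤ ∑ j, q j := Finset.single_le_sum (fun j _ => hq j) (Finset.mem_univ i)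
    have := Real.log_le_log h hle
    linarith

lemma my_group_le {ι : Type*} [Fintype ι] (q : ι → ℝ) (hq : ∀ i, 0 ≤ q i) :
    Real.negMulLog (∑ i, q i) ≤ ∑ i, Real.negMulLog (q i) := by
  have h := Finset.sum_nonneg (s := Finset.univ) (fun i _ => my_group_term_nonneg q hq i)
  rw [← my_group_diff q] at h
  linarith

lemma my_group_eq_iff {ι : Type*} [Fintype ι] (q : ι → ℝ) (hq : ∀ i, 0 ≤ q i) :
    ∑ i, Real.negMulLog (q i) - Real.negMulLog (∑ i, q i) = 0
      ↔ ∀ i, 0 < q i → q i = ∑ j, q j := by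
  rw [my_group_diff q,
    Finset.sum_eq_zero_iff_of_nonneg (fun i _ => my_group_term_nonneg q hq i)]
  constructor
  · intro h i hi
    have := h i (Finset.mem_univ i)
    have h2 : Real.log (∑ j, q j) - Real.log (q i) = 0 := by
      rcases mul_eq_zero.1 this with h' | h'
      · exact absurd h' (ne_of_gt hi)
      · exact h'
    have hs : 0 < ∑ j, q j :=
      lt_of_lt_of_le hi (Finset.single_le_sum (fun j _ => hq j) (Finset.mem_univ i))
    have := Real.log_injOn_pos (Set.mem_Ioi.2 hs) (Set.mem_Ioi.2 hi) (by linarith)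
    exact this.symm
  · intro h i _
    rcases eq_or_lt_of_le (hq i) with h' | h'
    · simp [← h']
    · rw [h i h']
      ring

lemma my_gibbs {ι : Type*} [Fintype ι] (t ν : ι → ℝ) (ht : ∀ i, 0 ≤ t i) (hν : ∀ i, 0 ≤ ν i)
    (ht1 : ∑ i, t i = 1) (hν1 : ∑ i, ν i = 1) (hpos : ∀ i, 0 < t i → 0 < ν i) :
    0 ≤ ∑ i, t i * (Real.log (t i) - Real.log (ν i)) ∧
      (∑ i, t i * (Real.log (t i) - Real.log (ν i)) = 0 ↔ ∀ i, t i = ν i) := by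
  have key : ∀ i, t i - ν i ≤ t i * (Real.log (t i) - Real.log (ν i)) := by
    intro i
    rcases eq_or_lt_of_le (ht i) with h | h
    · simp [← h]; exact hν i
    · have hνi := hpos i h
      have hlog : Real.log (ν i / t i) ≤ ν i / t i - 1 :=
        Real.log_le_sub_one_of_pos (div_pos hνi h)
      rw [Real.log_div (ne_of_gt hνi) (ne_of_gt h)] at hlog
      have := mul_le_mul_of_nonneg_left hlog (le_of_lt h)
      have ht' : t i * (ν i / t i - 1) = ν i - t i := by field_simp
      nlinarith
  have hsum : ∑ i, (t i - ν i) = 0 := by rw [Finset.sum_sub_distrib, ht1, hν1]; ring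
  have hle : 0 ≤ ∑ i, t i * (Real.log (t i) - Real.log (ν i)) := by
    calc (0:ℝ) = ∑ i, (t i - ν i) := hsum.symm
    _ ≤ _ := Finset.sum_le_sum fun i _ => key i
  refine ⟨hle, ?_, ?_⟩
  · intro h0
    have heq : ∀ i ∈ Finset.univ, t i - ν i = t i * (Real.log (t i) - Real.log (ν i)) := by
      have := (Finset.sum_eq_sum_iff_of_le (fun i _ => key i)).1 (by rw [hsum, h0])
      intro i hi; exact (this i hi)
    intro i
    have hi := heq i (Finset.mem_univ i)
    rcases eq_or_lt_of_le (ht i) with h | h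
    · rw [← h] at hi ⊢
      simp at hi
      have := hν i
      nlinarith [hi]
    · have hνi := hpos i h
      by_contra hne
      have hne' : ν i / t i ≠ 1 := by
        intro hc
        apply hne
        field_simp at hc
        linarith
      have hlog : Real.log (ν i / t i) < ν i / t i - 1 :=
        Real.log_lt_sub_one_of_pos (div_pos hνi h) hne'
      rw [Real.log_div (ne_of_gt hνi) (ne_of_gt h)] at hlog
      have := mul_lt_mul_of_pos_left hlog h
      have ht' : t i * (ν i / t i - 1) = ν i - t i := by field_simp
      nlinarith
  · intro h
    apply Finset.sum_eq_zero
    intro i _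
    rw [h i]
    ring

lemma my_condEnt_zero_iff [Fintype κ] [DecidableEq κ] [Fintype α] [DecidableEq α]
    (hp0 : ∀ ω, 0 ≤ p ω) (K : Ω → κ) (X : Ω → α) :
    condEnt p K X = 0 ↔ ∀ x k, 0 < pr p (fun ω => (K ω, X ω)) (k, x) →
      pr p (fun ω => (K ω, X ω)) (k, x) = pr p X x := by
  have hrw : condEnt p K X = ∑ x,
      (∑ k, Real.negMulLog (pr p (fun ω => (K ω, X ω)) (k, x))
        - Real.negMulLog (∑ k, pr p (fun ω => (K ω, X ω)) (k, x))) := by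
    unfold condEnt ent
    rw [Fintype.sum_prod_type, Finset.sum_comm, ← Finset.sum_sub_distrib]
    refine Finset.sum_congr rfl fun x _ => ?_
    rw [my_pr_marg_right K X x]
  have hnn : ∀ x, 0 ≤ ∑ k, Real.negMulLog (pr p (fun ω => (K ω, X ω)) (k, x))
      - Real.negMulLog (∑ k, pr p (fun ω => (K ω, X ω)) (k, x)) := fun x => by
    have := my_group_le (fun k => pr p (fun ω => (K ω, X ω)) (k, x))
      (fun k => my_pr_nonneg hp0 _ _)
    linarith
  rw [hrw, Finset.sum_eq_zero_iff_of_nonneg (fun x _ => hnn x)]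
  constructor
  · intro h x k hk
    have := (my_group_eq_iff (fun k => pr p (fun ω => (K ω, X ω)) (k, x))
      (fun k => my_pr_nonneg hp0 _ _)).1 (h x (Finset.mem_univ x)) k hk
    rw [this, my_pr_marg_right K X x]
  · intro h x _
    apply (my_group_eq_iff (fun k => pr p (fun ω => (K ω, X ω)) (k, x))
      (fun k => my_pr_nonneg hp0 _ _)).2
    intro k hk
    rw [h x k hk, ← my_pr_marg_right K X x]

lemma my_det [Fintype κ] [DecidableEq κ] [Fintype α] [DecidableEq α]
    (hp0 : ∀ ω, 0 ≤ p ω) {K : Ω → κ} {X : Ω → α} (h : condEnt p K X = 0) :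
    ∀ ⦃ω ω'⦄, 0 < p ω → 0 < p ω' → X ω = X ω' → K ω = K ω' := by
  intro ω ω' hω hω' hXX
  by_contra hne
  have hiff := (my_condEnt_zero_iff hp0 K X).1 h
  have h1 : 0 < pr p (fun ω => (K ω, X ω)) (K ω, X ω) :=
    lt_of_lt_of_le hω (my_pr_ge hp0 (fun ω => (K ω, X ω)) ω)
  have h2 : 0 < pr p (fun ω => (K ω, X ω)) (K ω', X ω) := by
    have := my_pr_ge hp0 (fun ω => (K ω, X ω)) ω'
    rw [← hXX] at this
    exact lt_of_lt_of_le hω' this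
  have e1 := hiff (X ω) (K ω) h1
  have e2 := hiff (X ω) (K ω') h2
  have hsum : ∑ k, pr p (fun ω => (K ω, X ω)) (k, X ω) = pr p X (X ω) :=
    my_pr_marg_right K X (X ω)
  have hadd : pr p (fun ω => (K ω, X ω)) (K ω, X ω) + pr p (fun ω => (K ω, X ω)) (K ω', X ω)
      ≤ ∑ k, pr p (fun ω => (K ω, X ω)) (k, X ω) := by
    rw [← Finset.add_sum_erase _ _ (Finset.mem_univ (K ω))]
    gcongr
    apply Finset.single_le_sum (f := fun k => pr p (fun ω => (K ω, X ω)) (k, X ω))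
      (fun k _ => my_pr_nonneg hp0 _ _)
    exact Finset.mem_erase.2 ⟨fun hc => hne hc.symm, Finset.mem_univ _⟩
  rw [e1, e2, hsum] at hadd
  linarith

lemma my_condEnt_zero_of_det [Fintype κ] [DecidableEq κ] [Fintype α] [DecidableEq α]
    (hp0 : ∀ ω, 0 ≤ p ω) {K : Ω → κ} {Z : Ω → α}
    (hdet : ∀ ⦃ω ω'⦄, 0 < p ω → 0 < p ω' → Z ω = Z ω' → K ω = K ω') :
    condEnt p K Z = 0 := by
  rw [my_condEnt_zero_iff hp0 K Z]
  intro z k hk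
  obtain ⟨ω, hω, hωz⟩ := my_pr_pos_elim hp0 hk
  rw [← my_pr_marg_right K Z z]
  symm
  apply Finset.sum_eq_single
  · intro k' _ hk'
    by_contra hc
    have hpos : 0 < pr p (fun ω => (K ω, Z ω)) (k', z) := by
      rcases lt_or_eq_of_le (my_pr_nonneg hp0 (fun ω => (K ω, Z ω)) (k', z)) with h' | h'
      · exact h'
      · exact absurd h'.symm hc
    obtain ⟨ω', hω', hω'z⟩ := my_pr_pos_elim hp0 hpos
    have hZ : Z ω = Z ω' := by
      have e1 : Z ω = z := (Prod.mk.injEq _ _ _ _ ▸ hωz).2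
      have e2 : Z ω' = z := (Prod.mk.injEq _ _ _ _ ▸ hω'z).2
      rw [e1, e2]
    have := hdet hω hω' hZ
    have eK : K ω = k := (Prod.mk.injEq _ _ _ _ ▸ hωz).1
    have eK' : K ω' = k' := (Prod.mk.injEq _ _ _ _ ▸ hω'z).1
    exact hk' (by rw [← eK', ← this, eK])
  · intro hc
    exact absurd (Finset.mem_univ k) hc

end MyAux

/-- If `K` is a deterministic function of both `X` and `Y`, then `H(K) ≤ I(X;Y)`, with
equality iff `X` and `Y` are conditionally independent given `K`. -/
theorem stmt0 [Fintype Ω] [Fintype α] [DecidableEq α] [Fintype β] [DecidableEq β]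
    [Fintype κ] [DecidableEq κ] (p : Ω → ℝ) (hp : IsPMF p)
    (X : Ω → α) (Y : Ω → β) (K : Ω → κ)
    (hKX : condEnt p K X = 0) (hKY : condEnt p K Y = 0) :
    ent p K ≤ mutInf p X Y ∧ (ent p K = mutInf p X Y ↔ CondIndep p X Y K) := by
  obtain ⟨hp0, hp1⟩ := hp
  -- determinism
  have detX := my_det hp0 hKX
  have hKXY : condEnt p K (fun ω => (X ω, Y ω)) = 0 := by
    apply my_condEnt_zero_of_det hp0
    intro ω ω' hω hω' hZ
    exact detX hω hω' (congrArg Prod.fst hZ)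
  -- abbreviations
  set t : α × β × κ → ℝ := pr p (fun ω => (X ω, Y ω, K ω)) with htdef
  set a : α → κ → ℝ := fun x k => pr p (fun ω => (X ω, K ω)) (x, k) with hadef
  set b : β → κ → ℝ := fun y k => pr p (fun ω => (Y ω, K ω)) (y, k) with hbdef
  set c : κ → ℝ := pr p K with hcdef
  -- marginals
  have hma : ∀ x k, ∑ y, t (x, y, k) = a x k := by
    intro x k
    have : ∀ y, t (x, y, k) = pr p (fun ω => ((X ω, K ω), Y ω)) ((x, k), y) := by
      intro y
      apply my_pr_congr
      intro ω
      constructor <;> (intro h; simp only [Prod.mk.injEq] at h ⊢; tauto)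
    simp only [this]
    exact my_pr_marg_left (fun ω => (X ω, K ω)) Y (x, k)
  have hmb : ∀ y k, ∑ x, t (x, y, k) = b y k := by
    intro y k
    have : ∀ x, t (x, y, k) = pr p (fun ω => ((Y ω, K ω), X ω)) ((y, k), x) := by
      intro x
      apply my_pr_congr
      intro ω
      constructor <;> (intro h; simp only [Prod.mk.injEq] at h ⊢; tauto)
    simp only [this]
    exact my_pr_marg_left (fun ω => (Y ω, K ω)) X (y, k)
  have hmc : ∀ k, ∑ x, a x k = c k := fun k => my_pr_marg_right X K k
  have hmc2 : ∀ k, ∑ y, b y k = c k := fun k => my_pr_marg_right Y K k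
  have ht0 : ∀ z, 0 ≤ t z := fun z => my_pr_nonneg hp0 _ _
  have ha0 : ∀ x k, 0 ≤ a x k := fun x k => my_pr_nonneg hp0 _ _
  have hb0 : ∀ y k, 0 ≤ b y k := fun y k => my_pr_nonneg hp0 _ _
  have hc0 : ∀ k, 0 ≤ c k := fun k => my_pr_nonneg hp0 _ _
  have hta : ∀ x y k, t (x, y, k) ≤ a x k := by
    intro x y k
    rw [← hma x k]
    exact Finset.single_le_sum (f := fun y => t (x, y, k)) (fun y _ => ht0 _) (Finset.mem_univ y)
  have htb : ∀ x y k, t (x, y, k) ≤ b y k := by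
    intro x y k
    rw [← hmb y k]
    exact Finset.single_le_sum (f := fun x => t (x, y, k)) (fun x _ => ht0 _) (Finset.mem_univ x)
  have hac : ∀ x k, a x k ≤ c k := by
    intro x k
    rw [← hmc k]
    exact Finset.single_le_sum (f := fun x => a x k) (fun x _ => ha0 _ _) (Finset.mem_univ x)
  have htc : ∀ x y k, t (x, y, k) ≤ c k := fun x y k => le_trans (hta x y k) (hac x k)
  -- entropy identities
  have entXK : ent p (fun ω => (X ω, K ω)) = ent p X := by
    have h1 : ent p (fun ω => (K ω, X ω)) = ent p X := by
      unfold condEnt at hKX; linarith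
    rw [← h1]
    have := my_ent_comp (p := p) (Equiv.prodComm κ α) (fun ω => (K ω, X ω))
    simpa using this
  have entYK : ent p (fun ω => (Y ω, K ω)) = ent p Y := by
    have h1 : ent p (fun ω => (K ω, Y ω)) = ent p Y := by
      unfold condEnt at hKY; linarith
    rw [← h1]
    have := my_ent_comp (p := p) (Equiv.prodComm κ β) (fun ω => (K ω, Y ω))
    simpa using this
  have entT : ent p (fun ω => (X ω, Y ω, K ω)) = ent p (fun ω => (X ω, Y ω)) := by
    have h1 : ent p (fun ω => (K ω, (X ω, Y ω))) = ent p (fun ω => (X ω, Y ω)) := by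
      unfold condEnt at hKXY; linarith
    rw [← h1]
    have := my_ent_comp (p := p)
      ((Equiv.prodComm κ (α × β)).trans (Equiv.prodAssoc α β κ)) (fun ω => (K ω, (X ω, Y ω)))
    simpa using this
  -- express the gap as a triple sum
  have hA : ent p X = ∑ x, ∑ y, ∑ k, -(t (x, y, k) * Real.log (a x k)) := by
    rw [← entXK]
    unfold ent
    rw [Fintype.sum_prod_type]
    refine Finset.sum_congr rfl fun x _ => ?_
    rw [Finset.sum_comm]
    refine Finset.sum_congr rfl fun k _ => ?_
    rw [show pr p (fun ω => (X ω, K ω)) (x, k) = a x k from rfl, Real.negMulLog,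
      ← hma x k, neg_mul, Finset.sum_mul, ← Finset.sum_neg_distrib]
  have hB : ent p Y = ∑ x, ∑ y, ∑ k, -(t (x, y, k) * Real.log (b y k)) := by
    rw [← entYK]
    unfold ent
    rw [Fintype.sum_prod_type]
    rw [show ∑ x, ∑ y, ∑ k, -(t (x, y, k) * Real.log (b y k))
        = ∑ y, ∑ x, ∑ k, -(t (x, y, k) * Real.log (b y k)) from Finset.sum_comm]
    refine Finset.sum_congr rfl fun y _ => ?_
    rw [Finset.sum_comm]
    refine Finset.sum_congr rfl fun k _ => ?_
    rw [show pr p (fun ω => (Y ω, K ω)) (y, k) = b y k from rfl, Real.negMulLog,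
      ← hmb y k, neg_mul, Finset.sum_mul, ← Finset.sum_neg_distrib]
  have hC : ent p (fun ω => (X ω, Y ω)) = ∑ x, ∑ y, ∑ k, Real.negMulLog (t (x, y, k)) := by
    rw [← entT]
    unfold ent
    rw [Fintype.sum_prod_type]
    refine Finset.sum_congr rfl fun x _ => ?_
    rw [Fintype.sum_prod_type]
  have hD : ent p K = ∑ x, ∑ y, ∑ k, -(t (x, y, k) * Real.log (c k)) := by
    unfold ent
    rw [show ∑ x, ∑ y, ∑ k, -(t (x, y, k) * Real.log (c k))
        = ∑ k, ∑ x, ∑ y, -(t (x, y, k) * Real.log (c k)) from ?_]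
    · refine Finset.sum_congr rfl fun k _ => ?_
      rw [show pr p K k = c k from rfl, Real.negMulLog, ← hmc k, neg_mul, Finset.sum_mul,
        ← Finset.sum_neg_distrib]
      refine Finset.sum_congr rfl fun x _ => ?_
      rw [← hma x k, Finset.sum_mul, ← Finset.sum_neg_distrib]
    · calc ∑ x, ∑ y, ∑ k, -(t (x, y, k) * Real.log (c k))
          = ∑ x, ∑ k, ∑ y, -(t (x, y, k) * Real.log (c k)) :=
            Finset.sum_congr rfl fun x _ => Finset.sum_comm
      _ = ∑ k, ∑ x, ∑ y, -(t (x, y, k) * Real.log (c k)) := Finset.sum_comm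
  have hS : mutInf p X Y - ent p K
      = ∑ z : α × β × κ, t z * (Real.log (t z) + Real.log (c z.2.2)
          - Real.log (a z.1 z.2.2) - Real.log (b z.2.1 z.2.2)) := by
    rw [Fintype.sum_prod_type]
    simp only [Fintype.sum_prod_type]
    rw [mutInf, hA, hB, hC, hD]
    simp only [← Finset.sum_sub_distrib, ← Finset.sum_add_distrib]
    refine Finset.sum_congr rfl fun x _ => Finset.sum_congr rfl fun y _ =>
      Finset.sum_congr rfl fun k _ => ?_
    rw [Real.negMulLog]
    ring
  -- the comparison measure
  set ν : α × β × κ → ℝ := fun z =>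
    if 0 < c z.2.2 then a z.1 z.2.2 * b z.2.1 z.2.2 / c z.2.2 else 0 with hνdef
  have hν0 : ∀ z, 0 ≤ ν z := by
    intro z
    rw [hνdef]
    dsimp only
    split_ifs with h
    · exact div_nonneg (mul_nonneg (ha0 _ _) (hb0 _ _)) (le_of_lt h)
    · exact le_refl 0
  have ht1 : ∑ z : α × β × κ, t z = 1 := my_sum_pr hp1 _
  have hν1 : ∑ z : α × β × κ, ν z = 1 := by
    have hre : ∑ z : α × β × κ, ν z = ∑ k, ∑ x, ∑ y, ν (x, y, k) := by
      rw [Fintype.sum_prod_type]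
      simp only [Fintype.sum_prod_type]
      calc ∑ x, ∑ y, ∑ k, ν (x, y, k)
          = ∑ x, ∑ k, ∑ y, ν (x, y, k) := Finset.sum_congr rfl fun x _ => Finset.sum_comm
        _ = ∑ k, ∑ x, ∑ y, ν (x, y, k) := Finset.sum_comm
    rw [hre]
    have hk : ∀ k, ∑ x, ∑ y, ν (x, y, k) = c k := by
      intro k
      by_cases h : 0 < c k
      · have hv : ∀ x y, ν (x, y, k) = a x k * b y k / c k := by
          intro x y
          simp only [hνdef]
          rw [if_pos h]
        simp only [hv]
        calc ∑ x, ∑ y, a x k * b y k / c k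
            = ∑ x, a x k * (∑ y, b y k) / c k := Finset.sum_congr rfl fun x _ => by
              rw [Finset.mul_sum, Finset.sum_div]
          _ = (∑ x, a x k) * (∑ y, b y k) / c k := by rw [← Finset.sum_div, ← Finset.sum_mul]
          _ = c k := by rw [hmc k, hmc2 k]; field_simp
      · have hc' : c k = 0 := le_antisymm (not_lt.1 h) (hc0 k)
        have hv : ∀ x y, ν (x, y, k) = 0 := by
          intro x y
          simp only [hνdef]
          rw [if_neg h]
        simp only [hv]
        simp [hc']
    rw [Finset.sum_congr rfl fun k _ => hk k]
    exact my_sum_pr hp1 K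
  have hpos : ∀ z, 0 < t z → 0 < ν z := by
    rintro ⟨x, y, k⟩ ht
    have hck : 0 < c k := lt_of_lt_of_le ht (htc x y k)
    have hax : 0 < a x k := lt_of_lt_of_le ht (hta x y k)
    have hby : 0 < b y k := lt_of_lt_of_le ht (htb x y k)
    simp only [hνdef]
    rw [if_pos hck]
    positivity
  have hterm : ∀ z : α × β × κ, t z * (Real.log (t z) + Real.log (c z.2.2)
      - Real.log (a z.1 z.2.2) - Real.log (b z.2.1 z.2.2))
      = t z * (Real.log (t z) - Real.log (ν z)) := by
    rintro ⟨x, y, k⟩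
    rcases eq_or_lt_of_le (ht0 (x, y, k)) with h | h
    · rw [← h]; ring
    · have hck : 0 < c k := lt_of_lt_of_le h (htc x y k)
      have hax : 0 < a x k := lt_of_lt_of_le h (hta x y k)
      have hby : 0 < b y k := lt_of_lt_of_le h (htb x y k)
      have hν : ν (x, y, k) = a x k * b y k / c k := by
        simp only [hνdef]
        rw [if_pos hck]
      rw [hν, Real.log_div (by positivity) (ne_of_gt hck),
        Real.log_mul (ne_of_gt hax) (ne_of_gt hby)]
      ring
  have hS2 : mutInf p X Y - ent p K = ∑ z : α × β × κ, t z * (Real.log (t z) - Real.log (ν z)) := by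
    rw [hS]
    exact Finset.sum_congr rfl fun z _ => hterm z
  obtain ⟨hge, hiff⟩ := my_gibbs t ν ht0 hν0 ht1 hν1 hpos
  constructor
  · linarith
  constructor
  · intro h
    have h0 : ∑ z : α × β × κ, t z * (Real.log (t z) - Real.log (ν z)) = 0 := by linarith
    have htν := hiff.1 h0
    unfold CondIndep
    intro x y k
    show t (x, y, k) * c k = a x k * b y k
    have hz := htν (x, y, k)
    by_cases hck : 0 < c k
    · have hν : ν (x, y, k) = a x k * b y k / c k := by
        simp only [hνdef]
        rw [if_pos hck]
      rw [hν] at hz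
      rw [hz]
      field_simp
    · have hc' : c k = 0 := le_antisymm (not_lt.1 hck) (hc0 k)
      have ha' : a x k = 0 := le_antisymm (hc' ▸ hac x k) (ha0 x k)
      rw [hc', ha']
      ring
  · intro h
    have htν : ∀ z, t z = ν z := by
      rintro ⟨x, y, k⟩
      have hxy : t (x, y, k) * c k = a x k * b y k := h x y k
      by_cases hck : 0 < c k
      · have hν : ν (x, y, k) = a x k * b y k / c k := by
          simp only [hνdef]
          rw [if_pos hck]
        rw [hν, eq_div_iff (ne_of_gt hck)]
        exact hxy
      · have hc' : c k = 0 := le_antisymm (not_lt.1 hck) (hc0 k)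
        have ht' : t (x, y, k) = 0 := le_antisymm (hc' ▸ htc x y k) (ht0 _)
        have hν : ν (x, y, k) = 0 := by
          simp only [hνdef]
          rw [if_neg hck]
        rw [ht', hν]
    have h0 := hiff.2 htν
    linarith
end

section
/- Let X ↔ Y ↔ Z be a Markov chain of finite random variables. Define the relation on the support of X: x ~_{XY} x' iff x and x' are connected by a path in the bipartite graph of p_{X,Y} (edges between x and y iff p(x,y) > 0), and similarly ~_{XZ} for p_{X,Z}. Then for every x in the support of X, the equivalence class [x]_{XY} is contained in the equivalence class [x]_{XZ}. -/
open Finset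

variable {Ω α β γ κ : Type*}

/-- Marginal of a triple joint pmf on the first two coordinates. -/
noncomputable def margXY [Fintype γ] (q : α × β × γ → ℝ) : α × β → ℝ :=
  fun ab => ∑ c, q (ab.1, ab.2, c)

/-- Marginal of a triple joint pmf on the first and third coordinates. -/
noncomputable def margXZ [Fintype β] (q : α × β × γ → ℝ) : α × γ → ℝ :=
  fun ac => ∑ b, q (ac.1, b, ac.2)

/-- Marginal of a triple joint pmf on the last two coordinates. -/
noncomputable def margYZ [Fintype α] (q : α × β × γ → ℝ) : β × γ → ℝ :=
  fun bc => ∑ a, q (a, bc.1, bc.2)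

/-- Marginal of a triple joint pmf on the middle coordinate. -/
noncomputable def margY [Fintype α] [Fintype γ] (q : α × β × γ → ℝ) : β → ℝ :=
  fun b => ∑ a, ∑ c, q (a, b, c)

/-- For a Markov chain `X ↔ Y ↔ Z`, the `p_{X,Y}`-bipartite-graph equivalence class of
any supported `x` is contained in its `p_{X,Z}`-class. -/
theorem stmt4 [Fintype α] [Fintype β] [Fintype γ]
    (q : α × β × γ → ℝ) (hq : IsPMF q)
    (hmarkov : ∀ a b c, q (a, b, c) * margY q b = margXY q (a, b) * margYZ q (b, c))
    (x : α) (hx : ∃ z, 0 < margXZ q (x, z)) :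
    ∀ x', Conn (margXY q) x x' → Conn (margXZ q) x x' := by
  have hnn := hq.1
  have step : ∀ a a' : α, (∃ y, 0 < margXY q (a, y) ∧ 0 < margXY q (a', y)) →
      ∃ z, 0 < margXZ q (a, z) ∧ 0 < margXZ q (a', z) := by
    intro a a' ⟨y, h1, h2⟩
    -- find z with q (a, y, z) > 0
    have : ∑ _c : γ, (0 : ℝ) < ∑ c, q (a, y, c) := by simpa [margXY] using h1
    obtain ⟨z, hz⟩ := Finset.exists_lt_of_sum_lt this
    have hYZ : 0 < margYZ q (y, z) := by
      have : q (a, y, z) ≤ margYZ q (y, z) :=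
        Finset.single_le_sum (fun i _ => hnn (i, y, z)) (Finset.mem_univ a)
      linarith
    have hY : 0 < margY q y := by
      have h0 : (∑ c, q (a, y, c)) ≤ margY q y :=
        Finset.single_le_sum (f := fun i => ∑ c, q (i, y, c))
          (fun i _ => Finset.sum_nonneg fun c _ => hnn (i, y, c)) (Finset.mem_univ a)
      have h1 : q (a, y, z) ≤ ∑ c, q (a, y, c) :=
        Finset.single_le_sum (fun c _ => hnn (a, y, c)) (Finset.mem_univ z)
      linarith
    have hq2 : 0 < q (a', y, z) := by
      have hm := hmarkov a' y z
      nlinarith [hnn (a', y, z), mul_pos h2 hYZ]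
    refine ⟨z, ?_, ?_⟩
    · have : q (a, y, z) ≤ margXZ q (a, z) :=
        Finset.single_le_sum (fun i _ => hnn (a, i, z)) (Finset.mem_univ y)
      linarith
    · have : q (a', y, z) ≤ margXZ q (a', z) :=
        Finset.single_le_sum (fun i _ => hnn (a', i, z)) (Finset.mem_univ y)
      linarith
  intro x' h
  induction h with
  | refl => exact Relation.ReflTransGen.refl
  | tail _ hedge ih => exact ih.tail (step _ _ hedge)
end

section
/- Let X ↔ Y ↔ Z be a Markov chain. If K₁ is the Gács-Körner common information of (X,Y) (the index of the connected component of X in the bipartite graph of p_{X,Y}) and K₂ is the Gács-Körner common information of (X,Z), then K₂ is a deterministic function of K₁, i.e., H(K₂|K₁) = 0, and consequently H(K₂) ≤ H(K₁). -/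
open Finset

variable {Ω α β γ κ : Type*}

/-- The joint pmf of the pair `(X, Y)` under `p`. -/
noncomputable def jointPMF [Fintype Ω] (p : Ω → ℝ) [DecidableEq α] [DecidableEq β]
    (X : Ω → α) (Y : Ω → β) : α × β → ℝ :=
  fun ab => pr p (fun ω => (X ω, Y ω)) ab

section Helpers

variable [Fintype Ω] {p : Ω → ℝ}

lemma pr_nonneg (hp : ∀ ω, 0 ≤ p ω) [DecidableEq α] (X : Ω → α) (a : α) :
    0 ≤ pr p X a :=
  Finset.sum_nonneg fun ω _ => hp ω

lemma le_pr (hp : ∀ ω, 0 ≤ p ω) [DecidableEq α] (X : Ω → α) (ω₀ : Ω) :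
    p ω₀ ≤ pr p X (X ω₀) :=
  Finset.single_le_sum (fun ω _ => hp ω) (by simp)

lemma pr_comp_le (hp : ∀ ω, 0 ≤ p ω) [DecidableEq α] [DecidableEq β]
    (g : α → β) (X : Ω → α) (a : α) :
    pr p X a ≤ pr p (fun ω => g (X ω)) (g a) := by
  apply Finset.sum_le_sum_of_subset_of_nonneg
  · intro ω hω
    simp only [Finset.mem_filter, Finset.mem_univ, true_and] at *
    rw [hω]
  · intro ω _ _; exact hp ω

lemma exists_pos_of_pr_pos (hp : ∀ ω, 0 ≤ p ω) [DecidableEq α] {X : Ω → α} {a : α}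
    (h : 0 < pr p X a) : ∃ ω, X ω = a ∧ 0 < p ω := by
  by_contra hc
  push_neg at hc
  have : pr p X a ≤ 0 := by
    apply Finset.sum_nonpos
    intro ω hω
    simp only [Finset.mem_filter] at hω
    exact hc ω hω.2
  linarith

lemma pr_eq_fiber_sum [Fintype α] [DecidableEq α] [DecidableEq β]
    (g : α → β) (A : Ω → α) (b : β) :
    pr p (fun ω => g (A ω)) b
      = ∑ a ∈ Finset.univ.filter (fun a => g a = b), pr p A a := by
  unfold pr
  rw [← Finset.sum_fiberwise_of_maps_to (g := A)
      (t := Finset.univ.filter fun a => g a = b)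
      (fun ω hω => by simpa using (Finset.mem_filter.mp hω).2) p]
  apply Finset.sum_congr rfl
  intro a ha
  simp only [Finset.mem_filter, Finset.mem_univ, true_and] at ha
  apply Finset.sum_congr _ (fun _ _ => rfl)
  ext ω
  simp only [Finset.mem_filter, Finset.mem_univ, true_and]
  constructor
  · rintro ⟨-, h2⟩; exact h2
  · intro h2; exact ⟨by rw [h2, ha], h2⟩

lemma negMulLog_add_le {x y : ℝ} (hx : 0 ≤ x) (hy : 0 ≤ y) :
    Real.negMulLog (x + y) ≤ Real.negMulLog x + Real.negMulLog y := by
  have h1 : x * Real.log x ≤ x * Real.log (x + y) := by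
    rcases hx.eq_or_lt with h | h
    · simp [← h]
    · exact mul_le_mul_of_nonneg_left (Real.log_le_log h (by linarith)) hx
  have h2 : y * Real.log y ≤ y * Real.log (x + y) := by
    rcases hy.eq_or_lt with h | h
    · simp [← h]
    · exact mul_le_mul_of_nonneg_left (Real.log_le_log h (by linarith)) hy
  simp only [Real.negMulLog]
  nlinarith

lemma negMulLog_sum_le {ι : Type*} (s : Finset ι) (f : ι → ℝ) (hf : ∀ i ∈ s, 0 ≤ f i) :
    Real.negMulLog (∑ i ∈ s, f i) ≤ ∑ i ∈ s, Real.negMulLog (f i) := by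
  induction s using Finset.cons_induction with
  | empty => simp [Real.negMulLog_zero]
  | cons i s his ih =>
    rw [Finset.sum_cons, Finset.sum_cons]
    have h1 : 0 ≤ f i := hf i (Finset.mem_cons_self i s)
    have h2 : 0 ≤ ∑ j ∈ s, f j :=
      Finset.sum_nonneg fun j hj => hf j (Finset.mem_cons_of_mem hj)
    calc Real.negMulLog (f i + ∑ j ∈ s, f j)
        ≤ Real.negMulLog (f i) + Real.negMulLog (∑ j ∈ s, f j) :=
          negMulLog_add_le h1 h2
      _ ≤ Real.negMulLog (f i) + ∑ j ∈ s, Real.negMulLog (f j) := by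
          have := ih (fun j hj => hf j (Finset.mem_cons_of_mem hj))
          linarith

lemma pr_pair_comp [DecidableEq α] [DecidableEq β] (g : α → β) (A : Ω → α) (b : β) (a : α) :
    pr p (fun ω => (g (A ω), A ω)) (b, a) = if g a = b then pr p A a else 0 := by
  unfold pr
  split_ifs with h
  · apply Finset.sum_congr _ (fun _ _ => rfl)
    ext ω
    simp only [Finset.mem_filter, Finset.mem_univ, true_and, Prod.mk.injEq]
    constructor
    · rintro ⟨-, h2⟩; exact h2
    · intro h2; exact ⟨by rw [h2, h], h2⟩
  · apply Finset.sum_eq_zero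
    intro ω hω
    simp only [Finset.mem_filter, Finset.mem_univ, true_and, Prod.mk.injEq] at hω
    exact absurd (hω.2 ▸ hω.1) h

lemma ent_pair_comp [Fintype α] [DecidableEq α] [Fintype β] [DecidableEq β]
    (g : α → β) (A : Ω → α) :
    ent p (fun ω => (g (A ω), A ω)) = ent p A := by
  unfold ent
  rw [Fintype.sum_prod_type, Finset.sum_comm]
  apply Finset.sum_congr rfl
  intro a _
  rw [Finset.sum_congr rfl (fun b _ => by rw [pr_pair_comp g A b a])]
  simp [apply_ite Real.negMulLog, Real.negMulLog_zero]

lemma ent_comp_le (hp : ∀ ω, 0 ≤ p ω) [Fintype α] [DecidableEq α] [Fintype β] [DecidableEq β]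
    (g : α → β) (A : Ω → α) :
    ent p (fun ω => g (A ω)) ≤ ent p A := by
  unfold ent
  calc ∑ b, Real.negMulLog (pr p (fun ω => g (A ω)) b)
      ≤ ∑ b, ∑ a ∈ Finset.univ.filter (fun a => g a = b), Real.negMulLog (pr p A a) := by
        apply Finset.sum_le_sum
        intro b _
        rw [pr_eq_fiber_sum g A b]
        exact negMulLog_sum_le _ _ (fun a _ => pr_nonneg hp A a)
    _ = ∑ a, Real.negMulLog (pr p A a) :=
        Finset.sum_fiberwise_of_maps_to (fun a _ => Finset.mem_univ (g a)) _

lemma exists_factor {δ ε : Type*} [Nonempty ε] {f₁ : α → δ} {f₂ : α → ε}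
    (h : ∀ x x', f₁ x = f₁ x' → f₂ x = f₂ x') :
    ∃ g : δ → ε, ∀ x, g (f₁ x) = f₂ x := by
  classical
  refine ⟨fun d => if hd : ∃ x, f₁ x = d then f₂ hd.choose else Classical.arbitrary ε, ?_⟩
  intro x
  have hx : ∃ x', f₁ x' = f₁ x := ⟨x, rfl⟩
  beta_reduce
  rw [dif_pos hx]
  exact h _ _ hx.choose_spec

lemma mem_comp_iff [Fintype α] (q : α × β → ℝ) (x x' : α) :
    x' ∈ comp q x ↔ Conn q x x' := by
  classical
  simp [comp]

lemma conn_symm (q : α × β → ℝ) : Symmetric (Conn q) :=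
  have : Std.Symm (fun x x' => ∃ y, 0 < q (x, y) ∧ 0 < q (x', y)) :=
    ⟨fun a b ⟨y, h1, h2⟩ => ⟨y, h2, h1⟩⟩
  fun a b h => (Relation.ReflTransGen.stdSymm (r := fun x x' => ∃ y, 0 < q (x, y) ∧ 0 < q (x', y))).symm a b h

lemma comp_eq_of_conn [Fintype α] (q : α × β → ℝ) {x x' : α} (h : Conn q x x') :
    comp q x = comp q x' := by
  ext a
  rw [mem_comp_iff, mem_comp_iff]
  constructor
  · intro ha; exact Relation.ReflTransGen.trans (conn_symm q h) ha
  · intro ha; exact Relation.ReflTransGen.trans h ha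

end Helpers

section Markov

variable [Fintype Ω] {p : Ω → ℝ}

lemma markov_step [DecidableEq α] [DecidableEq β] [DecidableEq γ]
    (hp : ∀ ω, 0 ≤ p ω) (X : Ω → α) (Y : Ω → β) (Z : Ω → γ)
    (hmarkov : CondIndep p X Z Y) {x x' : α} {y : β}
    (h1 : 0 < pr p (fun ω => (X ω, Y ω)) (x, y))
    (h2 : 0 < pr p (fun ω => (X ω, Y ω)) (x', y)) :
    ∃ z, 0 < pr p (fun ω => (X ω, Z ω)) (x, z) ∧
      0 < pr p (fun ω => (X ω, Z ω)) (x', z) := by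
  obtain ⟨ω₀, hω₀, hpω₀⟩ := exists_pos_of_pr_pos hp h1
  have hX0 : X ω₀ = x := congrArg Prod.fst hω₀
  have hY0 : Y ω₀ = y := congrArg Prod.snd hω₀
  have hY : 0 < pr p Y y := by
    have := le_pr hp Y ω₀
    rw [hY0] at this
    linarith
  set z := Z ω₀ with hz
  have hZY : 0 < pr p (fun ω => (Z ω, Y ω)) (z, y) := by
    have := le_pr hp (fun ω => (Z ω, Y ω)) ω₀
    rw [hY0] at this
    linarith
  have key : ∀ x₀ : α, 0 < pr p (fun ω => (X ω, Y ω)) (x₀, y) →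
      0 < pr p (fun ω => (X ω, Z ω)) (x₀, z) := by
    intro x₀ hx₀
    have hm := hmarkov x₀ z y
    have htriple : 0 < pr p (fun ω => (X ω, Z ω, Y ω)) (x₀, z, y) := by
      have hnn : 0 ≤ pr p (fun ω => (X ω, Z ω, Y ω)) (x₀, z, y) :=
        pr_nonneg hp _ _
      rcases hnn.eq_or_lt with h | h
      · exfalso
        have : (0 : ℝ) < pr p (fun ω => (X ω, Y ω)) (x₀, y) *
            pr p (fun ω => (Z ω, Y ω)) (z, y) := mul_pos hx₀ hZY
        rw [← hm, ← h, zero_mul] at this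
        exact lt_irrefl 0 this
      · exact h
    have := pr_comp_le hp (fun t : α × γ × β => (t.1, t.2.1))
      (fun ω => (X ω, Z ω, Y ω)) (x₀, z, y)
    exact lt_of_lt_of_le htriple this
  exact ⟨z, key x h1, key x' h2⟩

end Markov

/-- Data processing for Gács–Körner common information: in a Markov chain `X ↔ Y ↔ Z`,
if `K₁ = CI(X,Y)` and `K₂ = CI(X,Z)` (connected-component variables), then
`H(K₂|K₁) = 0` and `H(K₂) ≤ H(K₁)`. -/
theorem stmt5 [Fintype Ω] [Fintype α] [DecidableEq α] [Fintype β] [DecidableEq β]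
    [Fintype γ] [DecidableEq γ] (p : Ω → ℝ) (hp : IsPMF p)
    (X : Ω → α) (Y : Ω → β) (Z : Ω → γ)
    (hmarkov : CondIndep p X Z Y) :
    condEnt p (fun ω => comp (jointPMF p X Z) (X ω))
        (fun ω => comp (jointPMF p X Y) (X ω)) = 0 ∧
    ent p (fun ω => comp (jointPMF p X Z) (X ω))
        ≤ ent p (fun ω => comp (jointPMF p X Y) (X ω)) := by
  classical
  obtain ⟨hp0, -⟩ := hp
  set qXY := jointPMF p X Y with hqXY
  set qXZ := jointPMF p X Z with hqXZ
  -- Conn qXY implies Conn qXZ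
  have hconn : ∀ x x' : α, Conn qXY x x' → Conn qXZ x x' := by
    intro x x' h
    apply Relation.ReflTransGen.mono ?_ _ _ h
    intro a b ⟨y, hay, hby⟩
    obtain ⟨z, hz1, hz2⟩ := markov_step hp0 X Y Z hmarkov hay hby
    exact ⟨z, hz1, hz2⟩
  have hfac : ∀ x x' : α, comp qXY x = comp qXY x' → comp qXZ x = comp qXZ x' := by
    intro x x' h
    have hx' : x' ∈ comp qXY x := by
      rw [h, mem_comp_iff]
      exact Relation.ReflTransGen.refl
    rw [mem_comp_iff] at hx'
    exact comp_eq_of_conn qXZ (hconn x x' hx')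
  obtain ⟨g, hg⟩ := exists_factor (f₂ := fun x => comp qXZ x) hfac
  have hKeq : (fun ω => comp qXZ (X ω)) = fun ω => g (comp qXY (X ω)) := by
    funext ω
    exact (hg (X ω)).symm
  constructor
  · show condEnt p (fun ω => comp qXZ (X ω)) (fun ω => comp qXY (X ω)) = 0
    rw [hKeq]
    unfold condEnt
    rw [ent_pair_comp g (fun ω => comp qXY (X ω))]
    ring
  · show ent p (fun ω => comp qXZ (X ω)) ≤ ent p (fun ω => comp qXY (X ω))
    rw [hKeq]
    exact ent_comp_le hp0 g (fun ω => comp qXY (X ω))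
end

section
/- Let (X_i, Y_i), i = 1,...,n be i.i.d. copies of (X,Y). Then the Gács-Körner common information of (X^n, Y^n) equals (K_1, ..., K_n), where K_i is the Gács-Körner common information of (X_i, Y_i); that is, the connected components of the bipartite graph of the product distribution p_{X,Y}^{⊗n} are exactly the n-fold products of the connected components of the bipartite graph of p_{X,Y}. -/
open Finset

variable {Ω α β γ κ : Type*}

lemma conn_supp {q : α × β → ℝ} {a a' : α} (h : Conn q a a') (ha : ∃ y, 0 < q (a, y)) :
    ∃ y, 0 < q (a', y) := by
  induction h with
  | refl => exact ha
  | tail _ hstep _ => obtain ⟨y, _, hy⟩ := hstep; exact ⟨y, hy⟩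

lemma lift_one [Fintype α] [Fintype β] {n : ℕ} [DecidableEq (Fin n)] (q : α × β → ℝ)
    (u : Fin n → α) (hu : ∀ i, ∃ y, 0 < q (u i, y)) (j : Fin n) {a' : α}
    (h : Conn q (u j) a') :
    Conn (fun s : (Fin n → α) × (Fin n → β) => ∏ i, q (s.1 i, s.2 i)) u
      (Function.update u j a') := by
  classical
  induction h with
  | refl => simpa [Function.update_eq_self] using
      (show
        Conn (fun s : (Fin n → α) × (Fin n → β) => ∏ i, q (s.1 i, s.2 i)) u u from Relation.ReflTransGen.refl)
  | @tail b c _ hstep ih =>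
    obtain ⟨yj, hb, hc⟩ := hstep
    choose w hw using hu
    refine ih.tail ⟨fun i => if i = j then yj else w i, ?_, ?_⟩
    · apply Finset.prod_pos; intro i _
      by_cases hij : i = j
      · subst hij; simpa using hb
      · simpa [Function.update_of_ne hij, hij] using hw i
    · apply Finset.prod_pos; intro i _
      by_cases hij : i = j
      · subst hij; simpa using hc
      · simpa [Function.update_of_ne hij, hij] using hw i

lemma lift_all [Fintype α] [Fintype β] {n : ℕ} (q : α × β → ℝ)
    (u u' : Fin n → α) (hu : ∀ i, ∃ y, 0 < q (u i, y))
    (h : ∀ i, Conn q (u i) (u' i)) :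
    Conn (fun s : (Fin n → α) × (Fin n → β) => ∏ i, q (s.1 i, s.2 i)) u u' := by
  classical
  have key : ∀ s : Finset (Fin n),
      Conn (fun s : (Fin n → α) × (Fin n → β) => ∏ i, q (s.1 i, s.2 i)) u
        (fun i => if i ∈ s then u' i else u i) := by
    intro s
    induction s using Finset.induction with
    | empty => simpa using
        (show
          Conn (fun s : (Fin n → α) × (Fin n → β) => ∏ i, q (s.1 i, s.2 i)) u u from Relation.ReflTransGen.refl)
    | @insert j s hj ih =>
      refine ih.trans ?_
      have heq : (fun i => if i ∈ insert j s then u' i else u i) =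
          Function.update (fun i => if i ∈ s then u' i else u i) j (u' j) := by
        funext i
        by_cases hij : i = j
        · subst hij; simp [hj]
        · simp [Function.update_of_ne hij, hij]
      rw [heq]
      have hv : ∀ i, ∃ y, 0 < q ((fun i => if i ∈ s then u' i else u i) i, y) := by
        intro i
        by_cases hi : i ∈ s
        · simpa [hi] using conn_supp (h i) (hu i)
        · simpa [hi] using hu i
      have hconn : Conn q ((fun i => if i ∈ s then u' i else u i) j) (u' j) := by
        simpa [hj] using h j
      exact lift_one q _ hv j hconn
  simpa using key Finset.univ

/-- Tensorization of Gács–Körner common information: the connected components of the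
bipartite graph of the product distribution `p_{X,Y}^{⊗n}` are exactly the `n`-fold
products of the connected components of the bipartite graph of `p_{X,Y}`. -/
theorem stmt6 [Fintype α] [Fintype β] (n : ℕ)
    (q : α × β → ℝ) (hq : IsPMF q)
    (xs xs' : Fin n → α) (hsupp : ∀ i, ∃ y, 0 < q (xs i, y)) :
    Conn (fun s : (Fin n → α) × (Fin n → β) => ∏ i, q (s.1 i, s.2 i)) xs xs' ↔
      ∀ i, Conn q (xs i) (xs' i) := by
  constructor
  · intro h i
    induction h with
    | refl => exact Relation.ReflTransGen.refl
    | tail _ hstep ih =>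
      obtain ⟨ys, h1, h2⟩ := hstep
      have key : ∀ (v : Fin n → α), 0 < (∏ k, q (v k, ys k)) → 0 < q (v i, ys i) := by
        intro v hv
        rcases (hq.1 (v i, ys i)).lt_or_eq with h' | h'
        · exact h'
        · rw [Finset.prod_eq_zero (Finset.mem_univ i) h'.symm] at hv
          exact absurd hv (lt_irrefl 0)
      exact ih.tail ⟨ys i, key _ h1, key _ h2⟩
  · intro h
    exact lift_all q xs xs' hsupp h
end

section
/- Suppose K is a deterministic function of both X and Y, and moreover H(K) = I(X;Y). Then H(X|K) = H(X|Y) and H(Y|K) = H(Y|X). -/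
open Finset

variable {Ω α β γ κ : Type*}

lemma ent_swap [Fintype Ω] (p : Ω → ℝ) [Fintype α] [DecidableEq α] [Fintype β] [DecidableEq β]
    (X : Ω → α) (Y : Ω → β) :
    ent p (fun ω => (X ω, Y ω)) = ent p (fun ω => (Y ω, X ω)) := by
  unfold ent
  apply Fintype.sum_equiv (Equiv.prodComm α β)
  rintro ⟨a, b⟩
  congr 1
  unfold pr
  apply Finset.sum_congr _ (fun _ _ => rfl)
  ext ω
  simp [Prod.ext_iff, and_comm]

/-- If `K` is a deterministic function of both `X` and `Y` and `H(K) = I(X;Y)`, then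
`H(X|K) = H(X|Y)` and `H(Y|K) = H(Y|X)`. -/
theorem stmt9 [Fintype Ω] [Fintype α] [DecidableEq α] [Fintype β] [DecidableEq β]
    [Fintype κ] [DecidableEq κ] (p : Ω → ℝ) (hp : IsPMF p)
    (X : Ω → α) (Y : Ω → β) (K : Ω → κ)
    (hKX : condEnt p K X = 0) (hKY : condEnt p K Y = 0)
    (hmax : ent p K = mutInf p X Y) :
    condEnt p X K = condEnt p X Y ∧ condEnt p Y K = condEnt p Y X := by
  have h1 : ent p (fun ω => (X ω, K ω)) = ent p X := by
    have := ent_swap p X K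
    unfold condEnt at hKX
    linarith
  have h2 : ent p (fun ω => (Y ω, K ω)) = ent p Y := by
    have := ent_swap p Y K
    unfold condEnt at hKY
    linarith
  have h3 := ent_swap p X Y
  unfold mutInf at hmax
  unfold condEnt
  constructor <;> linarith
end

section
/- In a Markov chain X ↔ Y ↔ Z with common informations K₁ = CI(X,Y) and K₂ = CI(X,Z), the partition of the support of X induced by K₂ is a coarsening of the partition induced by K₁: every K₂-equivalence class is a union of K₁-equivalence classes. -/
open Finset

variable {Ω α β γ κ : Type*}

/-- In a Markov chain `X ↔ Y ↔ Z`, the partition induced by `CI(X,Z)` coarsens the one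
induced by `CI(X,Y)`: every `p_{X,Z}`-component is a union of `p_{X,Y}`-components. -/
theorem stmt12 [Fintype α] [Fintype β] [Fintype γ]
    (q : α × β × γ → ℝ) (hq : IsPMF q)
    (hmarkov : ∀ a b c, q (a, b, c) * margY q b = margXY q (a, b) * margYZ q (b, c))
    (x : α) (hx : ∃ z, 0 < margXZ q (x, z)) :
    {x' | Conn (margXZ q) x x'} =
      ⋃ x' ∈ {x' | Conn (margXZ q) x x'}, {x'' | Conn (margXY q) x' x''} := by

  ext x''
  simp only [Set.mem_setOf_eq, Set.mem_iUnion, exists_prop]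
  constructor
  · intro h
    exact ⟨x'', h, Relation.ReflTransGen.refl⟩
  · rintro ⟨x', hxz, hxy⟩
    refine hxz.trans ?_
    refine Relation.ReflTransGen.mono ?_ _ _ hxy
    rintro a b ⟨y, ha, hb⟩
    -- from 0 < margXY q (a,y), get c with q(a,y,c) > 0
    obtain ⟨c, hc⟩ : ∃ c, 0 < q (a, y, c) := by
      by_contra hno
      push_neg at hno
      have : margXY q (a, y) ≤ 0 := Finset.sum_nonpos fun c _ => hno c
      linarith
    have hYZ : 0 < margYZ q (y, c) := by
      have h1 : q (a, y, c) ≤ margYZ q (y, c) :=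
        Finset.single_le_sum (fun i _ => hq.1 (i, y, c)) (Finset.mem_univ a)
      linarith
    have hY : 0 < margY q y := by
      have h2 : (∑ z, q (a, y, z)) ≤ margY q y := by
        refine Finset.single_le_sum (f := fun i => ∑ z, q (i, y, z)) ?_ (Finset.mem_univ a)
        exact fun i _ => Finset.sum_nonneg fun z _ => hq.1 (i, y, z)
      have h3 : 0 < ∑ z, q (a, y, z) := hc.trans_le
        (Finset.single_le_sum (fun z _ => hq.1 (a, y, z)) (Finset.mem_univ c))
      linarith
    have hb' : 0 < q (b, y, c) := by
      have hm := hmarkov b y c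
      nlinarith [hq.1 (b, y, c)]
    have ha' : 0 < q (a, y, c) := hc
    refine ⟨c, ?_, ?_⟩
    · exact ha'.trans_le (Finset.single_le_sum (fun i _ => hq.1 (a, i, c)) (Finset.mem_univ y))
    · exact hb'.trans_le (Finset.single_le_sum (fun i _ => hq.1 (b, i, c)) (Finset.mem_univ y))
end

section
/- The Gács-Körner common information K of (X,Y) (connected-component variable) is maximal: for any random variable U with H(U|X) = 0 and H(U|Y) = 0, U is a deterministic function of K, i.e., H(U|K) = 0. Consequently H(U) ≤ H(K). -/
open Finset

variable {Ω α β γ κ : Type*}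

section AuxLemmas

variable [Fintype Ω] {p : Ω → ℝ}

lemma pr_eq_sum_ite [DecidableEq α] (X : Ω → α) (a : α) :
    pr p X a = ∑ ω, if X ω = a then p ω else 0 := Finset.sum_filter _ _

lemma pr_pos_iff (hp : ∀ ω, 0 ≤ p ω) [DecidableEq α] (X : Ω → α) (a : α) :
    0 < pr p X a ↔ ∃ ω, 0 < p ω ∧ X ω = a := by
  constructor
  · intro h
    by_contra hc
    push_neg at hc
    have h0 : pr p X a ≤ 0 := by
      apply Finset.sum_nonpos
      intro ω hω
      have hXa := (Finset.mem_filter.mp hω).2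
      rcases (hp ω).lt_or_eq with h' | h'
      · exact absurd hXa (hc ω h')
      · exact le_of_eq h'.symm
    linarith
  · rintro ⟨ω, hω, hXa⟩
    calc (0:ℝ) < p ω := hω
    _ ≤ pr p X a := Finset.single_le_sum (fun i _ => hp i)
          (Finset.mem_filter.mpr ⟨Finset.mem_univ _, hXa⟩)

lemma pr_pair_snd [DecidableEq α] [DecidableEq β] [Fintype α] (X : Ω → α) (Y : Ω → β) (b : β) :
    ∑ a, pr p (fun ω => (X ω, Y ω)) (a, b) = pr p Y b := by
  simp only [pr_eq_sum_ite]
  rw [Finset.sum_comm]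
  refine Finset.sum_congr rfl fun ω _ => ?_
  by_cases h : Y ω = b <;> simp [Prod.ext_iff, h]

lemma pr_pair_fst [DecidableEq α] [DecidableEq β] [Fintype β] (X : Ω → α) (Y : Ω → β) (a : α) :
    ∑ b, pr p (fun ω => (X ω, Y ω)) (a, b) = pr p X a := by
  simp only [pr_eq_sum_ite]
  rw [Finset.sum_comm]
  refine Finset.sum_congr rfl fun ω _ => ?_
  by_cases h : X ω = a <;> simp [Prod.ext_iff, h]

lemma term_ge {a s : ℝ} (ha : 0 ≤ a) (has : a ≤ s) :
    a * (-Real.log s) ≤ Real.negMulLog a := by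
  rcases ha.lt_or_eq with h | h
  · have hlog : Real.log a ≤ Real.log s := Real.log_le_log h has
    rw [Real.negMulLog]
    nlinarith
  · simp [← h, Real.negMulLog]

lemma sum_negMulLog_key {ι : Type*} [Fintype ι] {a : ι → ℝ} (ha : ∀ i, 0 ≤ a i) :
    Real.negMulLog (∑ i, a i) ≤ ∑ i, Real.negMulLog (a i) := by
  calc Real.negMulLog (∑ i, a i) = ∑ i, a i * (-Real.log (∑ j, a j)) := by
        rw [← Finset.sum_mul, Real.negMulLog]; ring
    _ ≤ ∑ i, Real.negMulLog (a i) :=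
        Finset.sum_le_sum fun i _ => term_ge (ha i)
          (Finset.single_le_sum (fun j _ => ha j) (Finset.mem_univ i))

lemma eq_case {ι : Type*} [Fintype ι] {a : ι → ℝ} (ha : ∀ i, 0 ≤ a i)
    (heq : ∑ i, Real.negMulLog (a i) = Real.negMulLog (∑ i, a i)) (i : ι) :
    a i = 0 ∨ a i = ∑ j, a j := by
  set s := ∑ j, a j with hs
  have hterm : ∀ j ∈ Finset.univ, a j * (-Real.log s) ≤ Real.negMulLog (a j) :=
    fun j _ => term_ge (ha j) (Finset.single_le_sum (fun k _ => ha k) (Finset.mem_univ j))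
  have hsum : ∑ j, a j * (-Real.log s) = Real.negMulLog s := by
    rw [← Finset.sum_mul, Real.negMulLog]; ring
  have heach : Real.negMulLog (a i) = a i * (-Real.log s) := by
    have h0 : ∑ j, (Real.negMulLog (a j) - a j * (-Real.log s)) = 0 := by
      rw [Finset.sum_sub_distrib, hsum, heq]; ring
    have h1 := (Finset.sum_eq_zero_iff_of_nonneg
      (fun j hj => sub_nonneg.mpr (hterm j hj))).mp h0 i (Finset.mem_univ i)
    linarith [sub_eq_zero.mp h1]
  rcases (ha i).lt_or_eq with h | h
  · right
    have hsp : 0 < s := lt_of_lt_of_le h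
      (Finset.single_le_sum (fun k _ => ha k) (Finset.mem_univ i))
    have : a i * Real.log (a i) = a i * Real.log s := by
      rw [Real.negMulLog] at heach; nlinarith
    have hlog : Real.log (a i) = Real.log s := by
      exact mul_left_cancel₀ (ne_of_gt h) this
    calc a i = Real.exp (Real.log (a i)) := (Real.exp_log h).symm
    _ = Real.exp (Real.log s) := by rw [hlog]
    _ = s := Real.exp_log hsp
  · left; exact h.symm

lemma ent_pair_eq [Fintype α] [DecidableEq α] [Fintype β] [DecidableEq β]
    (X : Ω → α) (Y : Ω → β) :
    ent p (fun ω => (X ω, Y ω)) =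
      ∑ b, ∑ a, Real.negMulLog (pr p (fun ω => (X ω, Y ω)) (a, b)) := by
  rw [ent, Fintype.sum_prod_type, Finset.sum_comm]

/-- `U` is determined by `Z` on the support of `p`. -/
def Det [Fintype Ω] (p : Ω → ℝ) (U : Ω → κ) (Z : Ω → γ) : Prop :=
  ∀ ω ω', 0 < p ω → 0 < p ω' → Z ω = Z ω' → U ω = U ω'

lemma condEnt_zero_of_det (hp : ∀ ω, 0 ≤ p ω) [Fintype κ] [DecidableEq κ] [Fintype γ]
    [DecidableEq γ] {U : Ω → κ} {Z : Ω → γ} (h : Det p U Z) : condEnt p U Z = 0 := by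
  rw [condEnt, sub_eq_zero, ent_pair_eq, ent]
  refine Finset.sum_congr rfl fun z _ => ?_
  by_cases hz : 0 < pr p Z z
  · obtain ⟨ω, hω, hZω⟩ := (pr_pos_iff hp Z z).mp hz
    have hu : ∀ u, u ≠ U ω → pr p (fun ω => (U ω, Z ω)) (u, z) = 0 := by
      intro u hne
      by_contra hc
      have hpos : 0 < pr p (fun ω => (U ω, Z ω)) (u, z) :=
        (pr_nonneg hp _ _).lt_of_ne (Ne.symm hc)
      obtain ⟨ω', hω', hval⟩ := (pr_pos_iff hp _ _).mp hpos
      simp only [Prod.mk.injEq] at hval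
      exact hne (hval.1 ▸ h ω' ω hω' hω (hval.2.trans hZω.symm))
    have hmarg : pr p (fun ω => (U ω, Z ω)) (U ω, z) = pr p Z z := by
      rw [← pr_pair_snd U Z z]
      exact (Finset.sum_eq_single (U ω) (fun u _ hne => hu u hne)
        (fun hn => absurd (Finset.mem_univ _) hn)).symm
    calc ∑ u, Real.negMulLog (pr p (fun ω => (U ω, Z ω)) (u, z))
        = Real.negMulLog (pr p (fun ω => (U ω, Z ω)) (U ω, z)) :=
          Finset.sum_eq_single (U ω)
            (fun u _ hne => by rw [hu u hne]; exact Real.negMulLog_zero)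
            (fun hn => absurd (Finset.mem_univ _) hn)
      _ = Real.negMulLog (pr p Z z) := by rw [hmarg]
  · have hz0 : pr p Z z = 0 := le_antisymm (not_lt.mp hz) (pr_nonneg hp Z z)
    have hall : ∀ u, pr p (fun ω => (U ω, Z ω)) (u, z) = 0 := by
      intro u
      have hle : pr p (fun ω => (U ω, Z ω)) (u, z) ≤ pr p Z z := by
        rw [← pr_pair_snd U Z z]
        exact Finset.single_le_sum
          (fun k _ => pr_nonneg hp (fun ω => (U ω, Z ω)) (k, z)) (Finset.mem_univ u)
      exact le_antisymm (hz0 ▸ hle) (pr_nonneg hp _ _)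
    rw [hz0, Real.negMulLog_zero]
    exact Finset.sum_eq_zero fun u _ => by rw [hall u]; exact Real.negMulLog_zero

lemma det_of_condEnt_zero (hp : ∀ ω, 0 ≤ p ω) [Fintype κ] [DecidableEq κ] [Fintype γ]
    [DecidableEq γ] {U : Ω → κ} {Z : Ω → γ} (h : condEnt p U Z = 0) : Det p U Z := by
  intro ω ω' hω hω' hZ
  by_contra hne
  have hle : ∀ z' ∈ (Finset.univ : Finset γ), Real.negMulLog (pr p Z z') ≤
      ∑ u, Real.negMulLog (pr p (fun ω => (U ω, Z ω)) (u, z')) := fun z' _ => by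
    rw [← pr_pair_snd U Z z']
    exact sum_negMulLog_key (fun u => pr_nonneg hp _ _)
  have hsum : ∑ z', ∑ u, Real.negMulLog (pr p (fun ω => (U ω, Z ω)) (u, z')) =
      ∑ z', Real.negMulLog (pr p Z z') := by
    rw [condEnt, sub_eq_zero, ent_pair_eq, ent] at h
    exact h
  have heach : ∑ u, Real.negMulLog (pr p (fun ω => (U ω, Z ω)) (u, Z ω)) =
      Real.negMulLog (pr p Z (Z ω)) := by
    have h0 : ∑ z', (∑ u, Real.negMulLog (pr p (fun ω => (U ω, Z ω)) (u, z'))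
        - Real.negMulLog (pr p Z z')) = 0 := by
      rw [Finset.sum_sub_distrib, hsum]; ring
    have h1 := (Finset.sum_eq_zero_iff_of_nonneg
      (fun z' hz' => sub_nonneg.mpr (hle z' hz'))).mp h0 (Z ω) (Finset.mem_univ (Z ω))
    linarith [sub_eq_zero.mp h1]
  have heq : ∑ u, Real.negMulLog (pr p (fun ω => (U ω, Z ω)) (u, Z ω)) =
      Real.negMulLog (∑ u, pr p (fun ω => (U ω, Z ω)) (u, Z ω)) := by
    rw [pr_pair_snd U Z (Z ω)]; exact heach
  have hcases := fun u =>
    eq_case (fun u => pr_nonneg hp (fun ω => (U ω, Z ω)) (u, Z ω)) heq u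
  set s := ∑ u, pr p (fun ω => (U ω, Z ω)) (u, Z ω) with hs
  have hposω : 0 < pr p (fun ω => (U ω, Z ω)) (U ω, Z ω) :=
    (pr_pos_iff hp _ _).mpr ⟨ω, hω, rfl⟩
  have hposω' : 0 < pr p (fun ω => (U ω, Z ω)) (U ω', Z ω) :=
    (pr_pos_iff hp _ _).mpr ⟨ω', hω', by rw [hZ]⟩
  have h1 : pr p (fun ω => (U ω, Z ω)) (U ω, Z ω) = s := by
    rcases hcases (U ω) with h' | h'
    · exact absurd h' (ne_of_gt hposω)
    · exact h'
  have h2 : pr p (fun ω => (U ω, Z ω)) (U ω', Z ω) = s := by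
    rcases hcases (U ω') with h' | h'
    · exact absurd h' (ne_of_gt hposω')
    · exact h'
  have hpair : pr p (fun ω => (U ω, Z ω)) (U ω, Z ω) +
      pr p (fun ω => (U ω, Z ω)) (U ω', Z ω) ≤ s := by
    rw [hs]
    calc pr p (fun ω => (U ω, Z ω)) (U ω, Z ω) + pr p (fun ω => (U ω, Z ω)) (U ω', Z ω)
        = ∑ u ∈ {U ω, U ω'}, pr p (fun ω => (U ω, Z ω)) (u, Z ω) :=
          (Finset.sum_pair (f := fun u => pr p (fun ω => (U ω, Z ω)) (u, Z ω)) hne).symm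
      _ ≤ ∑ u, pr p (fun ω => (U ω, Z ω)) (u, Z ω) :=
          Finset.sum_le_sum_of_subset_of_nonneg (Finset.subset_univ _)
            (fun u _ _ => pr_nonneg hp _ _)
  rw [h1, h2] at hpair
  have : 0 < s := h1 ▸ hposω
  linarith

lemma ent_left_le (hp : ∀ ω, 0 ≤ p ω) [Fintype κ] [DecidableEq κ] [Fintype γ] [DecidableEq γ]
    (U : Ω → κ) (K : Ω → γ) : ent p U ≤ ent p (fun ω => (U ω, K ω)) := by
  rw [ent, ent, Fintype.sum_prod_type]
  apply Finset.sum_le_sum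
  intro u _
  rw [← pr_pair_fst U K u]
  exact sum_negMulLog_key fun k => pr_nonneg hp _ _

end AuxLemmas

/-- Maximality of Gács–Körner common information: any `U` with `H(U|X) = H(U|Y) = 0`
is a deterministic function of the connected-component variable `K`, so `H(U) ≤ H(K)`. -/
theorem stmt14 [Fintype Ω] [Fintype α] [DecidableEq α] [Fintype β] [DecidableEq β]
    [Fintype κ] [DecidableEq κ] (p : Ω → ℝ) (hp : IsPMF p)
    (X : Ω → α) (Y : Ω → β) (U : Ω → κ)
    (hUX : condEnt p U X = 0) (hUY : condEnt p U Y = 0) :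
    condEnt p U (fun ω => comp (jointPMF p X Y) (X ω)) = 0 ∧
    ent p U ≤ ent p (fun ω => comp (jointPMF p X Y) (X ω)) := by
  set q := jointPMF p X Y with hq
  set K := fun ω => comp q (X ω) with hK
  have hdX : Det p U X := det_of_condEnt_zero hp.1 hUX
  have hdY : Det p U Y := det_of_condEnt_zero hp.1 hUY
  have hdK : Det p U K := by
    intro ω ω' hω hω' hKeq
    have hconn : Conn q (X ω) (X ω') := by
      have hmem : X ω' ∈ comp q (X ω') := by
        simp only [comp, Finset.mem_filter, Finset.mem_univ, true_and]
        exact Relation.ReflTransGen.refl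
      have hmem' : X ω' ∈ comp q (X ω) := by
        have : K ω = K ω' := hKeq
        simp only [hK] at this
        rw [this]; exact hmem
      simpa only [comp, Finset.mem_filter, Finset.mem_univ, true_and] using hmem'
    have hconn' : Relation.ReflTransGen
        (fun x x' => ∃ y, 0 < q (x, y) ∧ 0 < q (x', y)) (X ω) (X ω') := hconn
    have main : ∀ x', Relation.ReflTransGen
        (fun x x' => ∃ y, 0 < q (x, y) ∧ 0 < q (x', y)) (X ω) x' →
        ∀ ω'', 0 < p ω'' → X ω'' = x' → U ω'' = U ω := by
      intro x' hc
      induction hc with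
      | refl => intro ω'' h1 h2; exact hdX ω'' ω h1 hω h2
      | @tail b c hab hbc ih =>
        obtain ⟨y, hby, hcy⟩ := hbc
        simp only [hq, jointPMF] at hby hcy
        obtain ⟨ω1, hω1, h1⟩ := (pr_pos_iff hp.1 _ _).mp hby
        obtain ⟨ω2, hω2, h2⟩ := (pr_pos_iff hp.1 _ _).mp hcy
        intro ω'' h3 h4
        simp only [Prod.mk.injEq] at h1 h2
        have e1 : U ω'' = U ω2 := hdX ω'' ω2 h3 hω2 (by rw [h4, h2.1])
        have e2 : U ω2 = U ω1 := hdY ω2 ω1 hω2 hω1 (by rw [h2.2, h1.2])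
        have e3 : U ω1 = U ω := ih ω1 hω1 h1.1
        rw [e1, e2, e3]
    exact (main _ hconn' ω' hω' rfl).symm
  have hK0 : condEnt p U K = 0 := condEnt_zero_of_det hp.1 hdK
  refine ⟨hK0, ?_⟩
  have h1 : ent p U ≤ ent p (fun ω => (U ω, K ω)) := ent_left_le hp.1 U K
  have h2 : ent p (fun ω => (U ω, K ω)) = ent p K := by
    rw [condEnt, sub_eq_zero] at hK0
    exact hK0
  linarith
end

section
/- Let K be a function of both X and Y with H(K) = I(X;Y). Then any multicast rate triple satisfying the Slepian-Wolf region corner constraints H(X|Y) ≤ R_x, H(Y|X) ≤ R_y, H(X,Y) ≤ R_{xy} also satisfies H(X|K) ≤ R_x, H(Y|K) ≤ R_y, and H(X|K) + H(Y|K) + H(K) ≤ R_{xy}. -/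
open Finset

variable {Ω α β γ κ : Type*}

/-- When the common information attains the mutual information, any rate triple in the
Slepian–Wolf region is achievable by source decomposition. -/
theorem stmt19 [Fintype Ω] [Fintype α] [DecidableEq α] [Fintype β] [DecidableEq β]
    [Fintype κ] [DecidableEq κ] (p : Ω → ℝ) (hp : IsPMF p)
    (X : Ω → α) (Y : Ω → β) (K : Ω → κ)
    (hKX : condEnt p K X = 0) (hKY : condEnt p K Y = 0)
    (hmax : ent p K = mutInf p X Y)
    (Rx Ry Rxy : ℝ) (hRx : 0 ≤ Rx) (hRy : 0 ≤ Ry) (hRxy : 0 ≤ Rxy)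
    (h1 : condEnt p X Y ≤ Rx) (h2 : condEnt p Y X ≤ Ry)
    (h3 : ent p (fun ω => (X ω, Y ω)) ≤ Rxy) :
    condEnt p X K ≤ Rx ∧ condEnt p Y K ≤ Ry ∧
    condEnt p X K + condEnt p Y K + ent p K ≤ Rxy := by
  have hx : ent p (fun ω => (X ω, K ω)) = ent p (fun ω => (K ω, X ω)) := ent_swap p X K
  have hy : ent p (fun ω => (Y ω, K ω)) = ent p (fun ω => (K ω, Y ω)) := ent_swap p Y K
  have hxy : ent p (fun ω => (X ω, Y ω)) = ent p (fun ω => (Y ω, X ω)) := ent_swap p X Y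
  unfold condEnt at *
  unfold mutInf at hmax
  refine ⟨by linarith, by linarith, by linarith⟩
end
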